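/- arXiv:2002.01540 — 6 statements merged into one kernel-verified Lean document; each statement's English description precedes it below -/
import Mathlib

section
/- Let t ∈ ℤ with t ≥ 0. Let M be the ℂ-vector space with basis {m_k}_{k∈ℕ} and define linear endomorphisms E, F, H of M by E(m_k) = (−t−k)·m_{k−1} for k ≥ 1 and E(m₀) = 0, F(m_k) = (k+1)·m_{k+1}, H(m_k) = (−t−1−2k)·m_k. Then: (a) [H,E] = 2E, [H,F] = −2F, [E,F] = H; (b) m₀ is a highest weight vector of weight −t−1, i.e. E(m₀) = 0 and H(m₀) = (−t−1)·m₀, and the smallest E,F,H-invariant subspace containing m₀ is all of M; (c) M has no ℂ-subspace invariant under all of E, F, H other than 0 and M. Thus M is the irreducible Verma module of highest weight −t−1 (the global sections of the standard Harish-Chandra sheaf on ℂℙ¹ attached to the closed N-orbit). -/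
/-! E lowers the basis index with coefficients −t−k−1, which never vanish because t ≥ 0, so
applying E often enough to a nonzero vector of an invariant subspace lands on a nonzero multiple
of m₀; F raises the index with the nonzero coefficients k+1, so m₀ generates everything. The sl₂
relations are checked on the basis. -/

open Finsupp

theorem apply_eq_mul_apply_succ_of_lowering {R : Type*} [CommSemiring R]
    {E : (ℕ →₀ R) →ₗ[R] (ℕ →₀ R)} {c : ℕ → R} (hE0 : E (single 0 1) = 0)
    (hE : ∀ k, E (single (k + 1) 1) = c k • single k 1) (v : ℕ →₀ R) (j : ℕ) :
    E v j = c j * v (j + 1) := by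
  induction v using induction_linear with
  | zero => simp
  | add f g hf hg => simp [hf, hg, mul_add]
  | single a b =>
    rw [← smul_single_one, map_smul]
    rcases a with _ | k
    · simp [hE0]
    · rw [hE k]
      rcases eq_or_ne k j with rfl | hkj
      · simp [mul_comm]
      · simp [hkj]

theorem Finsupp.eq_single_zero_of_apply_succ_eq_zero {M : Type*} [Zero M] {v : ℕ →₀ M}
    (hv : ∀ j, v (j + 1) = 0) : v = single 0 (v 0) := by
  ext (_ | j) <;> simp [hv]

section Field

variable {K : Type*} [Field K]

theorem single_zero_mem_of_lowering {E : (ℕ →₀ K) →ₗ[K] (ℕ →₀ K)} {c : ℕ → K}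
    (hc : ∀ k, c k ≠ 0) (hE0 : E (single 0 1) = 0)
    (hE : ∀ k, E (single (k + 1) 1) = c k • single k 1)
    {W : Submodule K (ℕ →₀ K)} (hW : ∀ v ∈ W, E v ∈ W) {v : ℕ →₀ K} (hv : v ∈ W) (hv0 : v ≠ 0) :
    single 0 1 ∈ W := by
  obtain ⟨n, hn⟩ : ∃ n, ∀ j, n ≤ j → v j = 0 := by
    obtain ⟨n, hsub⟩ := Finset.exists_nat_subset_range v.support
    exact ⟨n, fun j hj => notMem_support_iff.1 fun h => by
      have := Finset.mem_range.1 (hsub h); omega⟩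
  induction n generalizing v with
  | zero => exact absurd (ext fun j => hn j j.zero_le) hv0
  | succ n ih =>
    by_cases htop : ∀ j, v (j + 1) = 0
    · rw [eq_single_zero_of_apply_succ_eq_zero htop] at hv hv0
      simpa [inv_mul_cancel₀ (single_ne_zero.1 hv0)] using W.smul_mem (v 0)⁻¹ hv
    · push Not at htop
      obtain ⟨j, hj⟩ := htop
      refine ih (hW v hv) (fun h => hj ?_) fun i hi => ?_
      · simpa [apply_eq_mul_apply_succ_of_lowering hE0 hE, hc j] using DFunLike.congr_fun h j
      · rw [apply_eq_mul_apply_succ_of_lowering hE0 hE, hn (i + 1) (by omega), mul_zero]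

theorem Submodule.eq_top_of_forall_single_one_mem {W : Submodule K (ℕ →₀ K)}
    (hW : ∀ k, single k 1 ∈ W) : W = ⊤ := by
  rw [eq_top_iff, ← (Finsupp.basisSingleOne (R := K) (ι := ℕ)).span_eq, Submodule.span_le]
  rintro _ ⟨k, rfl⟩
  simpa using hW k

theorem eq_top_of_single_zero_mem_of_raising {F : (ℕ →₀ K) →ₗ[K] (ℕ →₀ K)} {a : ℕ → K}
    (ha : ∀ k, a k ≠ 0) (hF : ∀ k, F (single k 1) = a k • single (k + 1) 1)
    {W : Submodule K (ℕ →₀ K)} (hW : ∀ v ∈ W, F v ∈ W) (h0 : single 0 1 ∈ W) : W = ⊤ := by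
  refine Submodule.eq_top_of_forall_single_one_mem fun k => ?_
  induction k with
  | zero => exact h0
  | succ k ih =>
    have := W.smul_mem (a k)⁻¹ (hW _ ih)
    rwa [hF, smul_smul, inv_mul_cancel₀ (ha k), one_smul] at this

end Field

/-- For t ≥ 0, the ℂ-vector space with basis {m_k}_{k∈ℕ} and
operators E(m_k) = (−t−k)m_{k−1} (E(m₀)=0), F(m_k) = (k+1)m_{k+1},
H(m_k) = (−t−1−2k)m_k satisfies the sl₂ relations, m₀ is a cyclic highest
weight vector of weight −t−1, and the module is irreducible: it is the
irreducible Verma module of highest weight −t−1. -/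
theorem verma_module_irreducible (t : ℤ) (ht : 0 ≤ t)
    (E F H : (ℕ →₀ ℂ) →ₗ[ℂ] (ℕ →₀ ℂ))
    (m : ℕ → ℕ →₀ ℂ) (hm : ∀ k, m k = Finsupp.single k 1)
    (hE0 : E (m 0) = 0)
    (hE : ∀ k : ℕ, E (m (k + 1)) = (-(t : ℂ) - (k + 1)) • m k)
    (hF : ∀ k : ℕ, F (m k) = ((k : ℂ) + 1) • m (k + 1))
    (hH : ∀ k : ℕ, H (m k) = (-(t : ℂ) - 1 - 2 * k) • m k) :
    -- (a) sl₂ relations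
    (H ∘ₗ E - E ∘ₗ H = (2 : ℂ) • E ∧
     H ∘ₗ F - F ∘ₗ H = (-2 : ℂ) • F ∧
     E ∘ₗ F - F ∘ₗ E = H) ∧
    -- (b) m₀ is a highest weight vector of weight −t−1 generating the module
    (E (m 0) = 0 ∧ H (m 0) = (-(t : ℂ) - 1) • m 0 ∧
     (∀ W : Submodule ℂ (ℕ →₀ ℂ), m 0 ∈ W →
        (∀ v ∈ W, E v ∈ W) → (∀ v ∈ W, F v ∈ W) → (∀ v ∈ W, H v ∈ W) →
        W = ⊤)) ∧
    -- (c) irreducibility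
    (∀ W : Submodule ℂ (ℕ →₀ ℂ),
      (∀ v ∈ W, E v ∈ W) → (∀ v ∈ W, F v ∈ W) → (∀ v ∈ W, H v ∈ W) →
      W = ⊥ ∨ W = ⊤) := by
  simp only [hm] at hE0 hE hF hH ⊢
  have hc (k : ℕ) : -(t : ℂ) - (k + 1) ≠ 0 := by
    have : -(t : ℂ) - (k + 1) = -((t + k + 1 : ℤ) : ℂ) := by push_cast; ring
    rw [this, neg_ne_zero, Int.cast_ne_zero]
    omega
  have hcyclic (W : Submodule ℂ (ℕ →₀ ℂ)) : single 0 1 ∈ W → (∀ v ∈ W, F v ∈ W) → W = ⊤ :=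
    fun h0 hW => eq_top_of_single_zero_mem_of_raising (Nat.cast_add_one_ne_zero ·) hF hW h0
  refine ⟨?relations, ⟨hE0, by simpa using hH 0, fun W h0 _ hFW _ => hcyclic W h0 hFW⟩,
    fun W hEW hFW _ => or_iff_not_imp_left.2 fun hW => ?_⟩
  case relations =>
    refine ⟨?_, ?_, ?_⟩ <;> refine Finsupp.basisSingleOne.ext fun k => ?_ <;>
    rcases k with _ | k <;>
    simp only [coe_basisSingleOne, LinearMap.sub_apply, LinearMap.comp_apply,
      LinearMap.smul_apply, map_smul, map_zero, hE0, hE, hF, hH] <;>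
    push_cast <;> module
  obtain ⟨v, hv, hv0⟩ := W.ne_bot_iff.1 hW
  exact hcyclic W (single_zero_mem_of_lowering hc hE0 hE hEW hv hv0) hFW
end

section
/- Let t ∈ ℤ. Let M be the ℂ-vector space with basis {n_k}_{k∈ℤ}. Define linear endomorphisms E, F, H of M by E(n_k) = k·n_{k−1}, F(n_k) = (t−1−k)·n_{k+1}, H(n_k) = (t−1−2k)·n_k, and linear endomorphisms E′, F′, H′ of M by E′(n_k) = (t−1+k)·n_{k−1}, F′(n_k) = −k·n_{k+1}, H′(n_k) = (−(t−1)−2k)·n_k. Then the linear bijection φ: M → M determined by φ(n_k) = n_{k−t+1} intertwines the two actions: φ∘E = E′∘φ, φ∘F = F′∘φ, φ∘H = H′∘φ. (These are the two local expressions, in the charts U∞ and U₀, of the 𝒟_t-module obtained by pushing forward the structure sheaf of the open orbit.) -/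
/-- On the ℂ-vector space with basis {n_k}_{k∈ℤ}, the linear
bijection φ(n_k) = n_{k−t+1} intertwines the two local expressions (in the
charts U∞ and U₀) of the sl₂-action on the pushforward of the structure sheaf
of the open orbit: φ∘E = E′∘φ, φ∘F = F′∘φ, φ∘H = H′∘φ. -/
theorem chart_change_intertwiner (t : ℤ)
    (E F H E' F' H' φ : (ℤ →₀ ℂ) →ₗ[ℂ] (ℤ →₀ ℂ))
    (n : ℤ → ℤ →₀ ℂ) (hn : ∀ k, n k = Finsupp.single k 1)
    (hE : ∀ k : ℤ, E (n k) = (k : ℂ) • n (k - 1))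
    (hF : ∀ k : ℤ, F (n k) = ((t : ℂ) - 1 - k) • n (k + 1))
    (hH : ∀ k : ℤ, H (n k) = ((t : ℂ) - 1 - 2 * k) • n k)
    (hE' : ∀ k : ℤ, E' (n k) = ((t : ℂ) - 1 + k) • n (k - 1))
    (hF' : ∀ k : ℤ, F' (n k) = (-(k : ℂ)) • n (k + 1))
    (hH' : ∀ k : ℤ, H' (n k) = (-((t : ℂ) - 1) - 2 * k) • n k)
    (hφ : ∀ k : ℤ, φ (n k) = n (k - t + 1)) :
    Function.Bijective φ ∧
    φ ∘ₗ E = E' ∘ₗ φ ∧ φ ∘ₗ F = F' ∘ₗ φ ∧ φ ∘ₗ H = H' ∘ₗ φ := by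
  set ψ : (ℤ →₀ ℂ) →ₗ[ℂ] (ℤ →₀ ℂ) := Finsupp.lmapDomain ℂ ℂ (fun k => k + t - 1)
    with hψdef
  have hψ : ∀ k : ℤ, ψ (n k) = n (k + t - 1) := by
    intro k
    simp only [hψdef, Finsupp.lmapDomain_apply, hn]
    exact Finsupp.mapDomain_single
  have hs : ∀ (k : ℤ) (c : ℂ), Finsupp.single k c = c • n k := by
    intro k c
    rw [hn, Finsupp.smul_single, smul_eq_mul, mul_one]
  refine ⟨?_, ?_, ?_, ?_⟩
  · have h1 : ψ ∘ₗ φ = LinearMap.id := by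
      apply Finsupp.lhom_ext
      intro k c
      simp only [hs, map_smul, LinearMap.comp_apply, LinearMap.id_apply, hφ, hψ]
      ring_nf
    have h2 : φ ∘ₗ ψ = LinearMap.id := by
      apply Finsupp.lhom_ext
      intro k c
      simp only [hs, map_smul, LinearMap.comp_apply, LinearMap.id_apply, hφ, hψ]
      ring_nf
    exact ⟨Function.LeftInverse.injective (g := ψ)
        fun x => by simpa using congrArg (fun f => f x) h1,
      Function.RightInverse.surjective (g := ψ)
        fun x => by simpa using congrArg (fun f => f x) h2⟩
  all_goals
    apply Finsupp.lhom_ext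
    intro k c
    simp only [hs, map_smul, LinearMap.comp_apply, hφ, hE, hF, hH, hE', hF', hH']
    simp only [hn, Finsupp.smul_single, smul_eq_mul, mul_one]
    congr 1 <;> first | omega | (push_cast; ring)
end

section
/- Let R = ℂ[z,z⁻¹] be the Laurent polynomial ring, let M be a nonzero R-module, and let (M_i)_{i∈ℤ} be ℂ-subspaces of M forming an internal direct sum decomposition M = ⊕_{i∈ℤ} M_i such that z·M_i ⊆ M_{i+2} for all i. Call an R-submodule N of M homogeneous if N = ⊕_{i∈ℤ} (N ∩ M_i). Assume M has no homogeneous R-submodule other than 0 and M. Then: (a) for every i ∈ ℤ and every nonzero m ∈ M_i, the map R → M, p ↦ p·m, is an isomorphism of R-modules; (b) there exists i₀ ∈ {0,1} such that M_j = 0 for every j not congruent to i₀ modulo 2. -/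
/-!
Write `R = K[T;T⁻¹]`. Multiplication by the unit `T` is a bijection of `M` mapping `Mᵢ` into
`Mᵢ₊₂`; since both `(Mᵢ)` and `(T • Mᵢ₋₂)` are internal direct sum decompositions, the
inclusion is an equality, so `Tⁿ • Mᵢ = Mᵢ₊₂ₙ` for every `n ∈ ℤ`. Hence for homogeneous
`m ∈ Mᵢ` the elements `Tⁿ • m` lie in distinct summands: if `m ≠ 0` they are linearly
independent, so `p ↦ p • m` is injective, and `R ∙ m` is a homogeneous submodule, so it is all
of `M` by irreducibility. Then `M = R ∙ m ⊆ ⨆ₙ Mᵢ₊₂ₙ` meets no `Mⱼ` with `j ≢ i (mod 2)`.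
-/

open LaurentPolynomial

theorem DirectSum.IsInternal.exists_mem_ne_zero {ι R M : Type*} [DecidableEq ι] [Semiring R]
    [AddCommMonoid M] [Module R M] [Nontrivial M] {A : ι → Submodule R M}
    (hA : DirectSum.IsInternal A) : ∃ i, ∃ m ∈ A i, m ≠ 0 := by
  by_contra! h
  have hbot : ⨆ i, A i = ⊥ := iSup_eq_bot.mpr fun i => (Submodule.eq_bot_iff _).mpr (h i)
  exact top_ne_bot (hA.submodule_iSup_eq_top.symm.trans hbot)

namespace LaurentPolynomial

section CommRing

variable {K M : Type*} [CommRing K] [AddCommGroup M] [Module K[T;T⁻¹] M]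

theorem T_smul_T_smul (a b : ℤ) (m : M) :
    (T a : K[T;T⁻¹]) • (T b : K[T;T⁻¹]) • m = (T (a + b) : K[T;T⁻¹]) • m := by
  rw [smul_smul, T_add]

variable [Module K M] [IsScalarTower K K[T;T⁻¹] M]

theorem C_mul_T_smul (a : K) (n : ℤ) (m : M) :
    (C a * T n : K[T;T⁻¹]) • m = a • (T n : K[T;T⁻¹]) • m := by
  rw [mul_smul, C_eq_algebraMap, algebraMap_smul]

theorem smul_eq_linearCombination (p : K[T;T⁻¹]) (m : M) :
    p • m = Finsupp.linearCombination K (fun n => (T n : K[T;T⁻¹]) • m) p.coeff := by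
  induction p using LaurentPolynomial.induction_on' with
  | add p q hp hq => rw [add_smul, hp, hq, AddMonoidAlgebra.coeff_add, map_add]
  | C_mul_T n a =>
    rw [C_mul_T_smul, ← single_eq_C_mul_T, AddMonoidAlgebra.coeff_single,
      Finsupp.linearCombination_single]

theorem toSpanSingleton_injective_of_linearIndependent {m : M}
    (hm : LinearIndependent K fun n => (T n : K[T;T⁻¹]) • m) :
    Function.Injective (LinearMap.toSpanSingleton K[T;T⁻¹] M m) := by
  intro p q hpq
  rw [LinearMap.toSpanSingleton_apply, LinearMap.toSpanSingleton_apply,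
    smul_eq_linearCombination, smul_eq_linearCombination] at hpq
  exact AddMonoidAlgebra.coeff_injective (hm hpq)

section Graded

variable {d : ℤ} {Mi : ℤ → Submodule K M}

theorem map_T_one_smul_eq (hMi : DirectSum.IsInternal Mi)
    (hT : ∀ i, ∀ m ∈ Mi i, (T 1 : K[T;T⁻¹]) • m ∈ Mi (i + d)) (i : ℤ) :
    (Mi i).map (DistribSMul.toLinearMap K M (T 1 : K[T;T⁻¹])) = Mi (i + d) := by
  set f := DistribSMul.toLinearMap K M (T 1 : K[T;T⁻¹])
  have hf : Function.Surjective f := fun m =>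
    ⟨(T (-1) : K[T;T⁻¹]) • m, by simp [f, T_smul_T_smul, T_zero]⟩
  suffices (fun j => (Mi (j - d)).map f) = Mi by simpa using congrFun this (i + d)
  refine (hMi.submodule_iSupIndep.le_iff_eq_of_iSup_eq_top ?_).mp fun j => ?_
  · have hshift : ⨆ j, Mi (j - d) = ⨆ j, Mi j := (Equiv.subRight d).iSup_comp
    rw [← Submodule.map_iSup, hshift, hMi.submodule_iSup_eq_top, Submodule.map_top,
      LinearMap.range_eq_top.mpr hf]
  · refine Submodule.map_le_iff_le_comap.mpr fun m hm => ?_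
    simpa [f] using hT (j - d) m hm

theorem T_neg_one_smul_mem (hMi : DirectSum.IsInternal Mi)
    (hT : ∀ i, ∀ m ∈ Mi i, (T 1 : K[T;T⁻¹]) • m ∈ Mi (i + d)) {i : ℤ} {m : M}
    (hm : m ∈ Mi (i + d)) : (T (-1) : K[T;T⁻¹]) • m ∈ Mi i := by
  obtain ⟨y, hy, rfl⟩ := map_T_one_smul_eq hMi hT i ▸ hm
  simpa [T_smul_T_smul, T_zero] using hy

theorem T_smul_mem (hMi : DirectSum.IsInternal Mi)
    (hT : ∀ i, ∀ m ∈ Mi i, (T 1 : K[T;T⁻¹]) • m ∈ Mi (i + d)) (n : ℤ) {i : ℤ} {m : M}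
    (hm : m ∈ Mi i) : (T n : K[T;T⁻¹]) • m ∈ Mi (i + d * n) := by
  induction n using Int.induction_on with
  | zero => simpa [T_zero] using hm
  | succ k ih =>
    rw [mul_add_one, ← add_assoc, add_comm (k : ℤ) 1, ← T_smul_T_smul]
    exact hT _ _ ih
  | pred k ih =>
    rw [sub_eq_neg_add, ← T_smul_T_smul]
    exact T_neg_one_smul_mem hMi hT (by convert ih using 2; ring)

theorem smul_mem_iSup_span_singleton_inf (hMi : DirectSum.IsInternal Mi)
    (hT : ∀ i, ∀ m ∈ Mi i, (T 1 : K[T;T⁻¹]) • m ∈ Mi (i + d)) (p : K[T;T⁻¹]) {i : ℤ} {m : M}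
    (hm : m ∈ Mi i) :
    p • m ∈ ⨆ n, (K[T;T⁻¹] ∙ m).restrictScalars K ⊓ Mi (i + d * n) := by
  induction p using LaurentPolynomial.induction_on' with
  | add p q hp hq => rw [add_smul]; exact add_mem hp hq
  | C_mul_T n a =>
    rw [C_mul_T_smul]
    refine Submodule.mem_iSup_of_mem n (Submodule.smul_mem _ a ⟨?_, T_smul_mem hMi hT n hm⟩)
    exact Submodule.smul_mem _ _ (Submodule.mem_span_singleton_self m)

theorem span_singleton_restrictScalars_eq_iSup_inf (hMi : DirectSum.IsInternal Mi)
    (hT : ∀ i, ∀ m ∈ Mi i, (T 1 : K[T;T⁻¹]) • m ∈ Mi (i + d)) {i : ℤ} {m : M}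
    (hm : m ∈ Mi i) :
    (K[T;T⁻¹] ∙ m).restrictScalars K = ⨆ j, (K[T;T⁻¹] ∙ m).restrictScalars K ⊓ Mi j := by
  refine le_antisymm (fun x hx => ?_) (iSup_le fun j => inf_le_left)
  obtain ⟨p, rfl⟩ := Submodule.mem_span_singleton.mp hx
  exact iSup_comp_le (fun j => (K[T;T⁻¹] ∙ m).restrictScalars K ⊓ Mi j) (i + d * ·)
    (smul_mem_iSup_span_singleton_inf hMi hT p hm)

theorem span_singleton_eq_top (hMi : DirectSum.IsInternal Mi)
    (hT : ∀ i, ∀ m ∈ Mi i, (T 1 : K[T;T⁻¹]) • m ∈ Mi (i + d))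
    (hirr : ∀ N : Submodule K[T;T⁻¹] M,
      N.restrictScalars K = ⨆ i, N.restrictScalars K ⊓ Mi i → N = ⊥ ∨ N = ⊤)
    {i : ℤ} {m : M} (hm : m ∈ Mi i) (hm0 : m ≠ 0) : K[T;T⁻¹] ∙ m = ⊤ :=
  (hirr _ (span_singleton_restrictScalars_eq_iSup_inf hMi hT hm)).resolve_left
    ((Submodule.span_singleton_eq_bot).not.mpr hm0)

theorem eq_bot_of_span_singleton_eq_top (hMi : DirectSum.IsInternal Mi)
    (hT : ∀ i, ∀ m ∈ Mi i, (T 1 : K[T;T⁻¹]) • m ∈ Mi (i + d)) {i : ℤ} {m : M}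
    (hm : m ∈ Mi i) (htop : K[T;T⁻¹] ∙ m = ⊤) {j : ℤ} (hj : ∀ n, i + d * n ≠ j) :
    Mi j = ⊥ := by
  have hdisj : Disjoint (Mi j) (⨆ k ∈ Set.range (i + d * ·), Mi k) :=
    hMi.submodule_iSupIndep.disjoint_biSup fun ⟨n, hn⟩ => hj n hn
  refine hdisj.eq_bot_of_le fun x _ => ?_
  have hx : x ∈ K[T;T⁻¹] ∙ m := htop ▸ Submodule.mem_top
  obtain ⟨p, rfl⟩ := Submodule.mem_span_singleton.mp hx
  rw [iSup_range]
  have hle : ⨆ n, (K[T;T⁻¹] ∙ m).restrictScalars K ⊓ Mi (i + d * n) ≤ ⨆ n, Mi (i + d * n) :=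
    iSup_mono fun n => inf_le_right
  exact hle (smul_mem_iSup_span_singleton_inf hMi hT p hm)

end Graded

end CommRing

section Field

variable {K M : Type*} [Field K] [AddCommGroup M] [Module K[T;T⁻¹] M] [Module K M]
  [IsScalarTower K K[T;T⁻¹] M]

theorem linearIndependent_T_smul {d : ℤ} {Mi : ℤ → Submodule K M} (hMi : DirectSum.IsInternal Mi)
    (hT : ∀ i, ∀ m ∈ Mi i, (T 1 : K[T;T⁻¹]) • m ∈ Mi (i + d)) (hd : d ≠ 0) {i : ℤ} {m : M}
    (hm : m ∈ Mi i) (hm0 : m ≠ 0) : LinearIndependent K fun n => (T n : K[T;T⁻¹]) • m :=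
  (hMi.submodule_iSupIndep.comp fun a b h => by simpa [hd] using h).linearIndependent _
    (fun n => T_smul_mem hMi hT n hm) fun n => (isUnit_T n).smul_eq_zero.not.mpr hm0

end Field

end LaurentPolynomial

/-- Let R = ℂ[z,z⁻¹], M a nonzero R-module with an internal
direct sum decomposition M = ⊕_{i∈ℤ} M_i into ℂ-subspaces with z·M_i ⊆ M_{i+2},
having no homogeneous R-submodule other than 0 and M.  Then (a) for every
nonzero homogeneous m ∈ M_i the map R → M, p ↦ p·m, is an isomorphism of
R-modules, and (b) there is i₀ ∈ {0,1} with M_j = 0 for all j ≢ i₀ (mod 2). -/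
theorem irreducible_K_homogeneous_module
    (M : Type) [AddCommGroup M] [Module (LaurentPolynomial ℂ) M]
    [Module ℂ M] [IsScalarTower ℂ (LaurentPolynomial ℂ) M]
    (hM : ∃ m : M, m ≠ 0)
    (Mi : ℤ → Submodule ℂ M)
    (hdecomp : DirectSum.IsInternal Mi)
    (hz : ∀ i : ℤ, ∀ m ∈ Mi i,
      (LaurentPolynomial.T 1 : LaurentPolynomial ℂ) • m ∈ Mi (i + 2))
    (hirr : ∀ N : Submodule (LaurentPolynomial ℂ) M,
      (N.restrictScalars ℂ = ⨆ i : ℤ, (N.restrictScalars ℂ ⊓ Mi i)) →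
      N = ⊥ ∨ N = ⊤) :
    (∀ i : ℤ, ∀ m ∈ Mi i, m ≠ 0 →
      Function.Bijective (LinearMap.toSpanSingleton (LaurentPolynomial ℂ) M m)) ∧
    (∃ i₀ : ℤ, (i₀ = 0 ∨ i₀ = 1) ∧ ∀ j : ℤ, j % 2 ≠ i₀ % 2 → Mi j = ⊥) := by
  have hspan {i : ℤ} {m : M} (hm : m ∈ Mi i) (hm0 : m ≠ 0) :=
    span_singleton_eq_top hdecomp hz hirr hm hm0
  refine ⟨fun i m hm hm0 => ⟨?_, ?_⟩, ?_⟩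
  · exact toSpanSingleton_injective_of_linearIndependent
      (linearIndependent_T_smul hdecomp hz two_ne_zero hm hm0)
  · rw [← LinearMap.range_eq_top, ← LinearMap.span_singleton_eq_range]
    exact hspan hm hm0
  · have : Nontrivial M := (nontrivial_iff_exists_ne 0).mpr hM
    obtain ⟨i, m, hm, hm0⟩ := hdecomp.exists_mem_ne_zero
    exact ⟨i % 2, Int.emod_two_eq_zero_or_one i, fun j hj =>
      eq_bot_of_span_singleton_eq_top hdecomp hz hm (hspan hm hm0) fun n => by omega⟩
end

section
/- Let t ∈ ℤ. Let P be the ℂ-vector space with basis {p_k}_{k∈ℤ} and define linear endomorphisms E, F, H of P by E(p_k) = (−t + 3/2 + k)·p_{k+1}, F(p_k) = (−k − 1/2)·p_{k−1}, H(p_k) = (−t + 2 + 2k)·p_k. Then: (a) [H,E] = 2E, [H,F] = −2F, [E,F] = H; (b) for every t ∈ ℤ, P has no ℂ-subspace invariant under all of E, F, H other than 0 and P. Thus P is the Harish-Chandra module of the irreducible principal series representation of SL(2,ℝ), realized as the global sections of the standard Harish-Chandra sheaf attached to the nontrivial K-homogeneous connection on the open K-orbit. -/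
/-!
`H` is diagonal in the basis `p k` with pairwise distinct eigenvalues `-t + 2 + 2k`, so an
`H`-invariant subspace `W` contains the `p k`-component of each of its vectors: `(H - λⱼ) w`
kills the `j`-component of `w` and rescales the others by nonzero factors, and one inducts on
the size of the support. Hence `W ≠ 0` contains some `p k`. The coefficients `-t + 3/2 + k` of
`E` and `-k - 1/2` of `F` are half-integers, hence nonzero, so `E` and `F` carry `p k` to
every `p n`, and `W` is everything.
-/

open Finsupp Function Finset

section Diagonal

variable {ι K : Type*} [Field K] {D : (ι →₀ K) →ₗ[K] (ι →₀ K)} {χ : ι → K}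

theorem Finsupp.apply_eq_mul_of_diagonal (hD : ∀ k, D (single k 1) = χ k • single k 1)
    (w : ι →₀ K) (i : ι) : D w i = χ i * w i := by
  classical
  induction w using Finsupp.induction_linear with
  | zero => simp
  | add f g hf hg => simp [hf, hg, mul_add]
  | single k c =>
    rw [← smul_single_one, map_smul, hD]
    by_cases h : i = k <;> simp [h, mul_comm]

theorem Finsupp.single_apply_mem_of_diagonal (hχ : Injective χ)
    (hD : ∀ k, D (single k 1) = χ k • single k 1) {W : Submodule K (ι →₀ K)}
    (hW : ∀ v ∈ W, D v ∈ W) {w : ι →₀ K} (hw : w ∈ W) (k : ι) : single k (w k) ∈ W := by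
  classical
  induction hn : #w.support using Nat.strong_induction_on generalizing w with
  | _ n ih =>
    by_cases hsupp : w.support ⊆ {k}
    · rwa [← support_subset_singleton.mp hsupp]
    obtain ⟨j, hj, hjk⟩ := Finset.not_subset.mp hsupp
    rw [Finset.mem_singleton] at hjk
    set v := D w - χ j • w
    have hv : ∀ i, v i = (χ i - χ j) * w i := fun i => by
      simp [v, apply_eq_mul_of_diagonal hD, sub_mul]
    have hvW : v ∈ W := W.sub_mem (hW w hw) (W.smul_mem _ hw)
    have hv_supp : v.support ⊆ w.support.erase j := fun i hi => by
      rw [mem_support_iff, hv] at hi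
      obtain ⟨hij, hwi⟩ := mul_ne_zero_iff.mp hi
      exact mem_erase.mpr ⟨fun h => hij (by rw [h, sub_self]), mem_support_iff.mpr hwi⟩
    have hv_card : #v.support < n :=
      hn ▸ (card_le_card hv_supp).trans_lt (card_erase_lt_of_mem hj)
    have hvk := ih _ hv_card hvW rfl
    rwa [hv, ← smul_eq_mul, ← smul_single,
      W.smul_mem_iff (sub_ne_zero.mpr (hχ.ne hjk).symm)] at hvk

theorem Finsupp.exists_single_one_mem_of_diagonal (hχ : Injective χ)
    (hD : ∀ k, D (single k 1) = χ k • single k 1) {W : Submodule K (ι →₀ K)}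
    (hW : ∀ v ∈ W, D v ∈ W) (hW₀ : W ≠ ⊥) : ∃ k, single k 1 ∈ W := by
  obtain ⟨w, hw, hw₀⟩ := W.exists_mem_ne_zero_of_ne_bot hW₀
  obtain ⟨k, hk⟩ := support_nonempty_iff.mpr hw₀
  refine ⟨k, (W.smul_mem_iff (mem_support_iff.mp hk)).mp ?_⟩
  simpa using single_apply_mem_of_diagonal hχ hD hW hw k

end Diagonal

theorem Finsupp.eq_top_of_single_one_mem {ι K : Type*} [Field K] {W : Submodule K (ι →₀ K)}
    (h : ∀ k, single k 1 ∈ W) : W = ⊤ := by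
  rw [eq_top_iff, ← Finsupp.basisSingleOne.span_eq, coe_basisSingleOne, Submodule.span_le]
  rintro _ ⟨k, rfl⟩
  exact h k

theorem Submodule.mem_of_ladder {K M : Type*} [Field K] [AddCommGroup M] [Module K M]
    {E F : M →ₗ[K] M} {p : ℤ → M} {a b : ℤ → K} (ha : ∀ k, a k ≠ 0) (hb : ∀ k, b k ≠ 0)
    (hE : ∀ k, E (p k) = a k • p (k + 1)) (hF : ∀ k, F (p k) = b k • p (k - 1))
    {W : Submodule K M} (hEW : ∀ v ∈ W, E v ∈ W) (hFW : ∀ v ∈ W, F v ∈ W)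
    {k : ℤ} (hk : p k ∈ W) (n : ℤ) : p n ∈ W := by
  induction n using Int.inductionOn' (b := k) with
  | zero => exact hk
  | succ n _ ih => exact (W.smul_mem_iff (ha n)).mp (hE n ▸ hEW _ ih)
  | pred n _ ih => exact (W.smul_mem_iff (hb n)).mp (hF n ▸ hFW _ ih)

theorem Int.cast_add_half_ne_zero {K : Type*} [Field K] [CharZero K] (n : ℤ) :
    (n : K) + 1 / 2 ≠ 0 := by
  intro h
  have h' : ((2 * n + 1 : ℤ) : K) = 0 := by push_cast; linear_combination 2 * h
  have := Int.cast_eq_zero.mp h'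
  omega

/-- For any t ∈ ℤ, on the ℂ-vector space P with basis {p_k}_{k∈ℤ}
with E(p_k) = (−t+3/2+k)·p_{k+1}, F(p_k) = (−k−1/2)·p_{k−1},
H(p_k) = (−t+2+2k)·p_k: (a) the sl₂ relations hold; (b) P has no invariant
subspace other than 0 and P.  This is the Harish-Chandra module of the
irreducible principal series of SL(2,ℝ). -/
theorem irreducible_principal_series (t : ℤ)
    (E F H : (ℤ →₀ ℂ) →ₗ[ℂ] (ℤ →₀ ℂ))
    (p : ℤ → ℤ →₀ ℂ) (hp : ∀ k, p k = Finsupp.single k 1)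
    (hE : ∀ k : ℤ, E (p k) = (-(t : ℂ) + 3 / 2 + k) • p (k + 1))
    (hF : ∀ k : ℤ, F (p k) = (-(k : ℂ) - 1 / 2) • p (k - 1))
    (hH : ∀ k : ℤ, H (p k) = (-(t : ℂ) + 2 + 2 * k) • p k) :
    -- (a) sl₂ relations
    (H ∘ₗ E - E ∘ₗ H = (2 : ℂ) • E ∧
     H ∘ₗ F - F ∘ₗ H = (-2 : ℂ) • F ∧
     E ∘ₗ F - F ∘ₗ E = H) ∧
    -- (b) irreducibility
    (∀ W : Submodule ℂ (ℤ →₀ ℂ),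
      (∀ v ∈ W, E v ∈ W) → (∀ v ∈ W, F v ∈ W) → (∀ v ∈ W, H v ∈ W) →
      W = ⊥ ∨ W = ⊤) := by
  simp only [hp] at hE hF hH
  refine ⟨?_, fun W hEW hFW hHW => or_iff_not_imp_left.mpr fun hW₀ => ?_⟩
  · refine ⟨?_, ?_, ?_⟩ <;> ext k : 2 <;>
      simp only [LinearMap.sub_apply, LinearMap.comp_apply, LinearMap.smul_apply, lsingle_apply,
        map_smul, hE, hF, hH, smul_smul, sub_add_cancel, add_sub_cancel_right] <;>
      match_scalars <;> ring
  have hχ : Injective fun k : ℤ => -(t : ℂ) + 2 + 2 * k := fun k l h => by simpa using h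
  have ha (k : ℤ) : -(t : ℂ) + 3 / 2 + k ≠ 0 := by
    convert Int.cast_add_half_ne_zero (K := ℂ) (k - t + 1) using 1; push_cast; ring
  have hb (k : ℤ) : -(k : ℂ) - 1 / 2 ≠ 0 := by
    convert neg_ne_zero.mpr (Int.cast_add_half_ne_zero (K := ℂ) k) using 1; ring
  obtain ⟨k, hk⟩ := exists_single_one_mem_of_diagonal hχ hH hHW hW₀
  exact eq_top_of_single_one_mem (Submodule.mem_of_ladder ha hb hE hF hEW hFW hk)
end

section
/- Let t ∈ ℤ and η ∈ ℂ with η ≠ 0. Let M be the ℂ-vector space with basis {n_k}_{k∈ℕ} and define linear endomorphisms E, F, H of M by E(n_k) = k·n_{k−1} + η·n_k (with n_{−1} := 0), F(n_k) = (t−1−k)·n_{k+1} − η·n_{k+2}, H(n_k) = (t−1−2k)·n_k − 2η·n_{k+1}. Then M has no ℂ-subspace invariant under all of E, F, H other than 0 and M; i.e. the Whittaker module M is irreducible. -/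
/-!
Write `n k` for `Finsupp.single k 1`. The operator `L = E - η` acts as
`L (n (k+1)) = (k+1) • n k`, `L (n 0) = 0`, so it lowers the top degree of every nonzero
vector by exactly one; applying it repeatedly to a nonzero vector of an invariant subspace
produces a nonzero multiple of `n 0`. Since `H (n k) ≡ -2η • n (k+1)` modulo `n k` and
`η ≠ 0`, the subspace then contains every `n k`.
-/

open Finsupp (single)

section Lowering

variable {K : Type*} [Field K]

/-- Under `single k 1 ↦ X ^ k`, such an `L` is differentiation of polynomials. -/
def IsLoweringOp (L : (ℕ →₀ K) →ₗ[K] (ℕ →₀ K)) : Prop :=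
  ∀ v j, L v j = ((j : K) + 1) * v (j + 1)

variable {L : (ℕ →₀ K) →ₗ[K] (ℕ →₀ K)}

theorem isLoweringOp_of_map_single (hL0 : L (single 0 1) = 0)
    (hL : ∀ k : ℕ, L (single (k + 1) 1) = ((k : K) + 1) • single k 1) : IsLoweringOp L := by
  intro v j
  induction v using Finsupp.induction_linear with
  | zero => simp
  | add v w hv hw => simp only [map_add, Finsupp.add_apply, hv, hw, mul_add]
  | single a b =>
    rw [← mul_one b, ← smul_eq_mul, ← Finsupp.smul_single, map_smul, Finsupp.smul_apply]
    cases a with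
    | zero => simp [hL0]
    | succ k =>
      rw [hL k]
      by_cases hkj : k = j
      · subst hkj; simp [mul_comm]
      · simp [hkj]

theorem IsLoweringOp.single_zero_mem_of_bounded [CharZero K] (hL : IsLoweringOp L)
    {W : Submodule K (ℕ →₀ K)} (hLW : ∀ v ∈ W, L v ∈ W) (N : ℕ) :
    ∀ v ∈ W, v ≠ 0 → (∀ j, N < j → v j = 0) → single 0 1 ∈ W := by
  induction N with
  | zero =>
    intro v hvW hv0 hv
    obtain ⟨c, rfl⟩ : ∃ c, v = single 0 c := by
      refine Finsupp.support_subset_singleton'.1 fun j hj => Finset.mem_singleton.2 ?_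
      by_contra hj0
      exact Finsupp.mem_support_iff.1 hj (hv j (Nat.pos_of_ne_zero hj0))
    have hc : c ≠ 0 := by simpa using hv0
    simpa [Finsupp.smul_single, hc] using W.smul_mem c⁻¹ hvW
  | succ N ih =>
    intro v hvW hv0 hv
    by_cases htop : v (N + 1) = 0
    · refine ih v hvW hv0 fun j hj => ?_
      rcases (Nat.succ_le_of_lt hj).eq_or_lt with rfl | hj'
      exacts [htop, hv j hj']
    · refine ih (L v) (hLW v hvW) (fun h => ?_) fun j hj => ?_
      · have hLvN : ((N : K) + 1) * v (N + 1) = 0 := by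
          rw [← hL, h, Finsupp.coe_zero, Pi.zero_apply]
        exact mul_ne_zero (Nat.cast_add_one_ne_zero N) htop hLvN
      · rw [hL, hv (j + 1) (by omega), mul_zero]

theorem IsLoweringOp.single_zero_mem_of_ne_bot [CharZero K] (hL : IsLoweringOp L)
    {W : Submodule K (ℕ →₀ K)} (hLW : ∀ v ∈ W, L v ∈ W) (hW : W ≠ ⊥) :
    single 0 1 ∈ W := by
  obtain ⟨v, hvW, hv0⟩ := Submodule.exists_mem_ne_zero_of_ne_bot hW
  refine hL.single_zero_mem_of_bounded hLW (v.support.sup id) v hvW hv0 fun j hj => ?_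
  by_contra hvj
  exact hj.not_ge (Finset.le_sup (f := id) (Finsupp.mem_support_iff.2 hvj))

end Lowering

theorem Submodule.mem_of_map_eq_smul_sub_smul {K V : Type*} [Field K] [AddCommGroup V]
    [Module K V] {W : Submodule K V} {T : V →ₗ[K] V} (hTW : ∀ v ∈ W, T v ∈ W)
    {x y : V} {a b : K}
    (hT : T x = a • x - b • y) (hb : b ≠ 0) (hx : x ∈ W) : y ∈ W := by
  have hby : b • y ∈ W := by
    rw [show b • y = a • x - T x by rw [hT, sub_sub_cancel]]
    exact W.sub_mem (W.smul_mem a hx) (hTW x hx)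
  simpa [smul_smul, hb] using W.smul_mem b⁻¹ hby

theorem Submodule.eq_top_of_forall_single_mem {K ι : Type*} [Field K]
    {W : Submodule K (ι →₀ K)}     (h : ∀ k, single k 1 ∈ W) : W = ⊤ :=
  eq_top_iff.2 <| (Finsupp.basisSingleOne.span_eq).symm.le.trans <|
    Submodule.span_le.2 <| Set.range_subset_iff.2 fun k => by simpa using h k

theorem whittaker_module_irreducible_general (t : ℤ) (η : ℂ) (hη : η ≠ 0)
    (E F H : (ℕ →₀ ℂ) →ₗ[ℂ] (ℕ →₀ ℂ))
    (n : ℕ → ℕ →₀ ℂ) (hn : ∀ k, n k = Finsupp.single k 1)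
    (hE0 : E (n 0) = η • n 0)
    (hE : ∀ k : ℕ, E (n (k + 1)) = ((k : ℂ) + 1) • n k + η • n (k + 1))
    (hH : ∀ k : ℕ, H (n k) = ((t : ℂ) - 1 - 2 * k) • n k - (2 * η) • n (k + 1)) :
    ∀ W : Submodule ℂ (ℕ →₀ ℂ),
      (∀ v ∈ W, E v ∈ W) → (∀ v ∈ W, F v ∈ W) → (∀ v ∈ W, H v ∈ W) →
      W = ⊥ ∨ W = ⊤ := by
  intro W hEW _ hHW
  obtain rfl : n = fun k => single k 1 := funext hn
  set L := E - η • LinearMap.id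
  have hLW : ∀ v ∈ W, L v ∈ W := fun v hv => W.sub_mem (hEW v hv) (W.smul_mem η hv)
  have hL : IsLoweringOp L :=
    isLoweringOp_of_map_single (by simp [L, hE0]) fun k => by simp [L, hE k]
  refine or_iff_not_imp_left.2 fun hW => Submodule.eq_top_of_forall_single_mem fun k => ?_
  induction k with
  | zero => exact hL.single_zero_mem_of_ne_bot hLW hW
  | succ k ih => exact W.mem_of_map_eq_smul_sub_smul hHW (hH k) (mul_ne_zero two_ne_zero hη) ih

/-- For t ∈ ℤ and η ≠ 0, the Whittaker module M (ℂ-vector space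
with basis {n_k}_{k∈ℕ}, E(n_k) = k·n_{k−1} + η·n_k, F(n_k) = (t−1−k)·n_{k+1}
− η·n_{k+2}, H(n_k) = (t−1−2k)·n_k − 2η·n_{k+1}) is irreducible: it has no
invariant subspace other than 0 and M. -/
theorem whittaker_module_irreducible (t : ℤ) (η : ℂ) (hη : η ≠ 0)
    (E F H : (ℕ →₀ ℂ) →ₗ[ℂ] (ℕ →₀ ℂ))
    (n : ℕ → ℕ →₀ ℂ) (hn : ∀ k, n k = Finsupp.single k 1)
    (hE0 : E (n 0) = η • n 0)
    (hE : ∀ k : ℕ, E (n (k + 1)) = ((k : ℂ) + 1) • n k + η • n (k + 1))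
    (hF : ∀ k : ℕ, F (n k) = ((t : ℂ) - 1 - k) • n (k + 1) - η • n (k + 2))
    (hH : ∀ k : ℕ, H (n k) = ((t : ℂ) - 1 - 2 * k) • n k - (2 * η) • n (k + 1)) :
    ∀ W : Submodule ℂ (ℕ →₀ ℂ),
      (∀ v ∈ W, E v ∈ W) → (∀ v ∈ W, F v ∈ W) → (∀ v ∈ W, H v ∈ W) →
      W = ⊥ ∨ W = ⊤ :=
  whittaker_module_irreducible_general t η hη E F H n hn hE0 hE hH
end

section
/- Let t ∈ ℤ and η ∈ ℂ. Let M be the ℂ-vector space with basis {n_k}_{k∈ℕ} and define linear endomorphisms E, F, H of M by E(n_k) = k·n_{k−1} + η·n_k (with n_{−1} := 0), F(n_k) = (t−1−k)·n_{k+1} − η·n_{k+2}, H(n_k) = (t−1−2k)·n_k − 2η·n_{k+1}. Then the Casimir operator acts as a scalar: as linear endomorphisms of M, H∘H + 2·E∘F + 2·F∘E = ((t−1)² + 2(t−1))·id. Hence the Whittaker module M has infinitesimal character sending the Casimir element Ω = H² + 2EF + 2FE ∈ Z(𝔤) to (t−1)² + 2(t−1). -/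
/-- For t ∈ ℤ and η ∈ ℂ, the Casimir operator
H² + 2EF + 2FE acts on the Whittaker module M (basis {n_k}_{k∈ℕ} with the
displayed action) as the scalar (t−1)² + 2(t−1). -/
theorem whittaker_module_casimir (t : ℤ) (η : ℂ)
    (E F H : (ℕ →₀ ℂ) →ₗ[ℂ] (ℕ →₀ ℂ))
    (n : ℕ → ℕ →₀ ℂ) (hn : ∀ k, n k = Finsupp.single k 1)
    (hE0 : E (n 0) = η • n 0)
    (hE : ∀ k : ℕ, E (n (k + 1)) = ((k : ℂ) + 1) • n k + η • n (k + 1))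
    (hF : ∀ k : ℕ, F (n k) = ((t : ℂ) - 1 - k) • n (k + 1) - η • n (k + 2))
    (hH : ∀ k : ℕ, H (n k) = ((t : ℂ) - 1 - 2 * k) • n k - (2 * η) • n (k + 1)) :
    H ∘ₗ H + (2 : ℂ) • (E ∘ₗ F) + (2 : ℂ) • (F ∘ₗ E) =
      (((t : ℂ) - 1) ^ 2 + 2 * ((t : ℂ) - 1)) •
        (LinearMap.id : (ℕ →₀ ℂ) →ₗ[ℂ] (ℕ →₀ ℂ)) := by
  have key : ∀ k : ℕ,
      (H ∘ₗ H + (2 : ℂ) • (E ∘ₗ F) + (2 : ℂ) • (F ∘ₗ E)) (n k)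
        = (((t : ℂ) - 1) ^ 2 + 2 * ((t : ℂ) - 1)) • n k := by
    intro k
    cases k with
    | zero =>
      have e1 := hE 0
      have e2 := hE 1
      have f0 := hF 0
      have f1 := hF 1
      have h0 := hH 0
      have h1 := hH 1
      norm_num at e1 e2 f0 f1 h0 h1
      simp only [LinearMap.add_apply, LinearMap.smul_apply, LinearMap.comp_apply,
        map_add, map_sub, map_smul, hE0, e1, e2, f0, f1, h0, h1]
      simp only [hn]
      ext j
      simp only [Finsupp.coe_add, Finsupp.coe_sub, Pi.add_apply, Pi.sub_apply,
        Finsupp.smul_apply, Finsupp.single_apply, smul_eq_mul]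
      split_ifs <;> ring
    | succ k =>
      have e1 := hE k
      have e2 := hE (k + 1)
      have e3 := hE (k + 2)
      have f0 := hF k
      have f1 := hF (k + 1)
      have f2 := hF (k + 2)
      have h1 := hH (k + 1)
      have h2 := hH (k + 2)
      simp only [LinearMap.add_apply, LinearMap.smul_apply, LinearMap.comp_apply,
        map_add, map_sub, map_smul, e1, e2, e3, f0, f1, f2, h1, h2]
      simp only [hn]
      ext j
      simp only [Finsupp.coe_add, Finsupp.coe_sub, Pi.add_apply, Pi.sub_apply,
        Finsupp.smul_apply, Finsupp.single_apply, smul_eq_mul]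
      split_ifs <;> (push_cast; ring)
  refine Finsupp.lhom_ext' fun k => LinearMap.ext_ring ?_
  simp only [LinearMap.comp_apply, Finsupp.lsingle_apply, LinearMap.smul_apply,
    LinearMap.id_apply]
  rw [← hn k]
  exact key k
end
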